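/- arXiv:2408.09573 — 2 statements merged into one kernel-verified Lean document; each statement's English description precedes it below -/
import Mathlib

section
/- Let a > 0 and 0 < m < M < ∞. Then there exists a constant C > 0, depending only on m, M and a, such that for every D ∈ Sym3 with (M+m)/2 ≤ |D| < M and every E ∈ Sym3, one has |L(D,E)|² ≤ C (1 + |S(D)|^a)^{1+1/a} Q(D,E). -/
noncomputable section

/-- Frobenius inner product on 3×3 real matrices: `A·B = Σ_{i,j} A_{ij} B_{ij}`. -/
def mdot (A B : Matrix (Fin 3) (Fin 3) ℝ) : ℝ := ∑ i, ∑ j, A i j * B i j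

/-- Frobenius norm `|A| = (A·A)^{1/2}`. -/
def mnorm (A : Matrix (Fin 3) (Fin 3) ℝ) : ℝ := Real.sqrt (mdot A A)

/-- The constitutive map `S(D) = (|D|−m)_+ (M^a − |D|^a)^{−1/a} D/|D|`, with `S(0) = 0`. -/
def Smap (a m M : ℝ) (D : Matrix (Fin 3) (Fin 3) ℝ) : Matrix (Fin 3) (Fin 3) ℝ :=
  ((max (mnorm D - m) 0) * (M ^ a - mnorm D ^ a) ^ (-1/a) / mnorm D) • D

/-- `L(D,E) = (|D|−m)(M^a−|D|^a)^{−1/a}E/|D|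
      + ((|D|−m)|D|^a + m(M^a−|D|^a))(M^a−|D|^a)^{−1−1/a}|D|^{−3}(D·E)D`. -/
def Lmap (a m M : ℝ) (D E : Matrix (Fin 3) (Fin 3) ℝ) : Matrix (Fin 3) (Fin 3) ℝ :=
  ((mnorm D - m) * (M ^ a - mnorm D ^ a) ^ (-1/a) / mnorm D) • E +
    (((mnorm D - m) * mnorm D ^ a + m * (M ^ a - mnorm D ^ a)) *
      (M ^ a - mnorm D ^ a) ^ (-1 - 1/a) * mdot D E / mnorm D ^ 3) • D

/-- `Q(D,E) = (|D|−m)(M^a−|D|^a)^{−1/a}|E|²/|D|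
      + ((|D|−m)|D|^a + m(M^a−|D|^a))(M^a−|D|^a)^{−1−1/a}|D|^{−3}(D·E)²`. -/
def Qmap (a m M : ℝ) (D E : Matrix (Fin 3) (Fin 3) ℝ) : ℝ :=
  (mnorm D - m) * (M ^ a - mnorm D ^ a) ^ (-1/a) * mnorm E ^ 2 / mnorm D +
    ((mnorm D - m) * mnorm D ^ a + m * (M ^ a - mnorm D ^ a)) *
      (M ^ a - mnorm D ^ a) ^ (-1 - 1/a) * (mdot D E) ^ 2 / mnorm D ^ 3

/-!
Put `r = |D|`, `t = M^a - r^a` and `P = D·E`. Then `L = α E + β P D` and `Q = α|E|² + β P²` with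
`α, β ≥ 0`, so expanding the square gives `|L|² ≤ (2α + β r²) Q`. On `r ≥ (M+m)/2` the factor
`2α + β r²` is at most a constant times `t^{-1-1/a}`, and since `|S(D)|^a = (r-m)^a / t` with
`r - m ≥ (M-m)/2`, that power is dominated by `(1 + |S(D)|^a)^{1+1/a}`.
-/

lemma mdot_self_nonneg (A : Matrix (Fin 3) (Fin 3) ℝ) : 0 ≤ mdot A A :=
  Finset.sum_nonneg fun _ _ => Finset.sum_nonneg fun _ _ => mul_self_nonneg _

lemma mnorm_sq (A : Matrix (Fin 3) (Fin 3) ℝ) : mnorm A ^ 2 = mdot A A :=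
  Real.sq_sqrt (mdot_self_nonneg A)

lemma mnorm_smul {c : ℝ} (hc : 0 ≤ c) (A : Matrix (Fin 3) (Fin 3) ℝ) :
    mnorm (c • A) = c * mnorm A := by
  have h : mdot (c • A) (c • A) = c ^ 2 * mdot A A := by
    simp only [mdot, Matrix.smul_apply, smul_eq_mul, Finset.mul_sum]
    exact Finset.sum_congr rfl fun _ _ => Finset.sum_congr rfl fun _ _ => by ring
  rw [mnorm, mnorm, h, Real.sqrt_mul (sq_nonneg c), Real.sqrt_sq hc]

lemma mdot_smul_add_smul_self (c d : ℝ) (D E : Matrix (Fin 3) (Fin 3) ℝ) :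
    mdot (c • E + d • D) (c • E + d • D)
      = c ^ 2 * mdot E E + 2 * c * d * mdot D E + d ^ 2 * mdot D D := by
  simp only [mdot, Matrix.add_apply, Matrix.smul_apply, smul_eq_mul, Fin.sum_univ_succ,
    Fin.sum_univ_zero]
  ring

lemma mnorm_smul_add_smul_sq_le {α β : ℝ} (hα : 0 ≤ α) (hβ : 0 ≤ β)
    (D E : Matrix (Fin 3) (Fin 3) ℝ) :
    mnorm (α • E + (β * mdot D E) • D) ^ 2
      ≤ (2 * α + β * mnorm D ^ 2) * (α * mnorm E ^ 2 + β * mdot D E ^ 2) := by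
  rw [mnorm_sq, mdot_smul_add_smul_self, ← mnorm_sq E, ← mnorm_sq D, ← sub_nonneg]
  have key : (2 * α + β * mnorm D ^ 2) * (α * mnorm E ^ 2 + β * mdot D E ^ 2)
      - (α ^ 2 * mnorm E ^ 2 + 2 * α * (β * mdot D E) * mdot D E
        + (β * mdot D E) ^ 2 * mnorm D ^ 2)
      = α * (α + β * mnorm D ^ 2) * mnorm E ^ 2 := by ring
  rw [key]
  positivity

lemma rpow_add_one_mul_rpow_neg_le {a x t : ℝ} (ha : 0 < a) (hx : 0 ≤ x) (ht : 0 < t) :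
    x ^ (a + 1) * t ^ (-1 - 1 / a) ≤ (1 + (x * t ^ (-1 / a)) ^ a) ^ (1 + 1 / a) := by
  have hpow : (x * t ^ (-1 / a)) ^ a = x ^ a * t ^ (-1 : ℝ) := by
    rw [Real.mul_rpow hx (Real.rpow_nonneg ht.le _), ← Real.rpow_mul ht.le]
    field_simp
  have hsucc : (x ^ a * t ^ (-1 : ℝ)) ^ (1 + 1 / a) = x ^ (a + 1) * t ^ (-1 - 1 / a) := by
    rw [Real.mul_rpow (by positivity) (by positivity), ← Real.rpow_mul hx,
      ← Real.rpow_mul ht.le]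
    congr 2
    · field_simp
    · ring
  rw [← hsucc, ← hpow]
  exact Real.rpow_le_rpow (by positivity) (le_add_of_nonneg_left zero_le_one) (by positivity)

def coefE (a m M r : ℝ) : ℝ := (r - m) * (M ^ a - r ^ a) ^ (-1/a) / r

def coefD (a m M r : ℝ) : ℝ :=
  ((r - m) * r ^ a + m * (M ^ a - r ^ a)) * (M ^ a - r ^ a) ^ (-1 - 1/a) / r ^ 3

lemma Lmap_eq (a m M : ℝ) (D E : Matrix (Fin 3) (Fin 3) ℝ) :
    Lmap a m M D E = coefE a m M (mnorm D) • E + (coefD a m M (mnorm D) * mdot D E) • D := by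
  rw [Lmap, coefE, coefD]
  congr 2
  ring

lemma Qmap_eq (a m M : ℝ) (D E : Matrix (Fin 3) (Fin 3) ℝ) :
    Qmap a m M D E
      = coefE a m M (mnorm D) * mnorm E ^ 2 + coefD a m M (mnorm D) * mdot D E ^ 2 := by
  rw [Qmap, coefE, coefD]
  ring

section Coefficients

variable {a m M r : ℝ}

lemma rpow_sub_rpow_pos (ha : 0 < a) (hr : 0 ≤ r) (hrM : r < M) : 0 < M ^ a - r ^ a :=
  sub_pos.2 (Real.rpow_lt_rpow hr hrM ha)

lemma coefE_nonneg (hm : 0 < m) (hmr : m ≤ r) (ht : 0 ≤ M ^ a - r ^ a) :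
    0 ≤ coefE a m M r :=
  div_nonneg (mul_nonneg (sub_nonneg.2 hmr) (Real.rpow_nonneg ht _)) (hm.trans_le hmr).le

lemma coefD_nonneg (hm : 0 < m) (hmr : m ≤ r) (ht : 0 ≤ M ^ a - r ^ a) :
    0 ≤ coefD a m M r := by
  have hr : 0 < r := hm.trans_le hmr
  have hg : 0 ≤ (r - m) * r ^ a + m * (M ^ a - r ^ a) :=
    add_nonneg (mul_nonneg (sub_nonneg.2 hmr) (Real.rpow_nonneg hr.le _)) (mul_nonneg hm.le ht)
  unfold coefD
  exact div_nonneg (mul_nonneg hg (Real.rpow_nonneg ht _)) (by positivity)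

lemma two_mul_coefE_add_coefD_mul_sq_le (ha : 0 < a) (hm : 0 < m) (hmr : m ≤ r) (hrM : r < M) :
    2 * coefE a m M r + coefD a m M r * r ^ 2
      ≤ 3 * M * M ^ a / m * (M ^ a - r ^ a) ^ (-1 - 1/a) := by
  have hr : 0 < r := hm.trans_le hmr
  have ht := rpow_sub_rpow_pos ha hr.le hrM
  have hra : 0 ≤ r ^ a := Real.rpow_nonneg hr.le a
  have hraM : r ^ a ≤ M ^ a := Real.rpow_le_rpow hr.le hrM.le ha.le
  unfold coefE coefD
  set t := M ^ a - r ^ a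
  set u := t ^ (-1 - 1/a)
  have hu : 0 ≤ u := Real.rpow_nonneg ht.le _
  have hv : t ^ (-1/a) = t * u := by
    rw [show (-1/a : ℝ) = 1 + (-1 - 1/a) by ring, Real.rpow_add ht, Real.rpow_one]
  have hsum : 2 * ((r - m) * (t * u) / r) + ((r - m) * r ^ a + m * t) * u / r ^ 3 * r ^ 2
      = ((2 * r - m) * t + (r - m) * r ^ a) / r * u := by
    field_simp
    ring
  have hnum : (2 * r - m) * t + (r - m) * r ^ a ≤ 3 * M * M ^ a := by
    have h1 : (2 * r - m) * t ≤ (2 * M) * M ^ a :=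
      mul_le_mul (by linarith) (by linarith) ht.le (by linarith)
    have h2 : (r - m) * r ^ a ≤ M * M ^ a :=
      mul_le_mul (by linarith) hraM hra (by linarith)
    linarith
  have hM : 0 < M := hr.trans hrM
  have hMa : 0 < M ^ a := Real.rpow_pos_of_pos hM a
  rw [hv, hsum]
  exact mul_le_mul_of_nonneg_right (div_le_div₀ (by positivity) hnum hm hmr) hu

def coefBound (a m M : ℝ) : ℝ := 3 * M * M ^ a / m / ((M - m) / 2) ^ (a + 1)

lemma coefBound_pos (hm : 0 < m) (hmM : m < M) : 0 < coefBound a m M := by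
  have hM : 0 < M := hm.trans hmM
  have : 0 < M ^ a := Real.rpow_pos_of_pos hM a
  have : 0 < ((M - m) / 2) ^ (a + 1) := Real.rpow_pos_of_pos (by linarith) _
  unfold coefBound
  positivity

lemma two_mul_coefE_add_coefD_mul_sq_le_coefBound (ha : 0 < a) (hm : 0 < m)
    (hr : (M + m) / 2 ≤ r) (hrM : r < M) :
    2 * coefE a m M r + coefD a m M r * r ^ 2
      ≤ coefBound a m M * (1 + ((r - m) * (M ^ a - r ^ a) ^ (-1/a)) ^ a) ^ (1 + 1/a) := by
  have hmr : m ≤ r := by linarith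
  have ht := rpow_sub_rpow_pos ha (hm.trans_le hmr).le hrM
  have hc : 0 < ((M - m) / 2) ^ (a + 1) := Real.rpow_pos_of_pos (by linarith) _
  have hgap : ((M - m) / 2) ^ (a + 1) ≤ (r - m) ^ (a + 1) :=
    Real.rpow_le_rpow (by linarith) (by linarith) (by linarith)
  have hpow := rpow_add_one_mul_rpow_neg_le ha (sub_nonneg.2 hmr) ht
  have hu : 0 ≤ (M ^ a - r ^ a) ^ (-1 - 1/a) := Real.rpow_nonneg ht.le _
  have hK : 0 ≤ 3 * M * M ^ a / m := by
    have hM : 0 < M := by linarith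
    have : 0 < M ^ a := Real.rpow_pos_of_pos hM a
    positivity
  calc 2 * coefE a m M r + coefD a m M r * r ^ 2
      ≤ 3 * M * M ^ a / m * (M ^ a - r ^ a) ^ (-1 - 1/a) :=
        two_mul_coefE_add_coefD_mul_sq_le ha hm hmr hrM
    _ ≤ 3 * M * M ^ a / m * ((1 + ((r - m) * (M ^ a - r ^ a) ^ (-1/a)) ^ a) ^ (1 + 1/a)
          / ((M - m) / 2) ^ (a + 1)) := by
        gcongr
        rw [le_div_iff₀ hc, mul_comm]
        exact (mul_le_mul_of_nonneg_right hgap hu).trans hpow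
    _ = _ := by rw [coefBound]; ring

end Coefficients

lemma mnorm_Smap {a m M : ℝ} (hm : 0 < m) {D : Matrix (Fin 3) (Fin 3) ℝ} (hmD : m ≤ mnorm D)
    (ht : 0 ≤ M ^ a - mnorm D ^ a) :
    mnorm (Smap a m M D) = (mnorm D - m) * (M ^ a - mnorm D ^ a) ^ (-1/a) := by
  have hD : 0 < mnorm D := hm.trans_le hmD
  rw [Smap, max_eq_left (sub_nonneg.2 hmD),
    mnorm_smul (div_nonneg (mul_nonneg (sub_nonneg.2 hmD) (Real.rpow_nonneg ht _)) hD.le)]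
  field_simp

/-- There is `C = C(m,M,a) > 0` such that for all symmetric `D, E` with
`(M+m)/2 ≤ |D| < M`: `|L(D,E)|² ≤ C (1 + |S(D)|^a)^{1+1/a} Q(D,E)`. -/
theorem Lmap_sq_le_Smap (a m M : ℝ) (ha : 0 < a) (hm : 0 < m) (hmM : m < M) :
    ∃ C : ℝ, 0 < C ∧ ∀ D E : Matrix (Fin 3) (Fin 3) ℝ, D.IsSymm → E.IsSymm →
      (M + m)/2 ≤ mnorm D → mnorm D < M →
      mnorm (Lmap a m M D E) ^ 2 ≤
        C * (1 + mnorm (Smap a m M D) ^ a) ^ (1 + 1/a) * Qmap a m M D E := by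
  refine ⟨coefBound a m M, coefBound_pos hm hmM, fun D E _ _ hlow hhi => ?_⟩
  have hmD : m ≤ mnorm D := by linarith
  have ht := rpow_sub_rpow_pos ha (hm.trans_le hmD).le hhi
  have hE := coefE_nonneg hm hmD ht.le
  have hD := coefD_nonneg hm hmD ht.le
  rw [Lmap_eq, Qmap_eq, mnorm_Smap hm hmD ht.le]
  calc _ ≤ _ := mnorm_smul_add_smul_sq_le hE hD D E
    _ ≤ _ := mul_le_mul_of_nonneg_right
        (two_mul_coefE_add_coefD_mul_sq_le_coefBound ha hm hlow hhi) (by positivity)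
end
end

section
/- Let a > 0 and 0 < m < M < ∞, let (X, 𝒜, μ) be a finite measure space, let H : X → Sym3 be measurable with |H(x)| < M for μ-a.e. x, and let G : X → Sym3 be Bochner integrable. Assume that x ↦ S(H(x)) is Bochner integrable, and that for every measurable B : X → Sym3 with |B(x)| < M for μ-a.e. x and with x ↦ S(B(x)) Bochner integrable, one has ∫_X (G(x) − S(B(x))) · (H(x) − B(x)) dμ(x) ≥ 0. Then G(x) = S(H(x)) for μ-a.e. x ∈ X. -/
open MeasureTheory

noncomputable section

attribute [local instance]
  Matrix.frobeniusSeminormedAddCommGroup Matrix.frobeniusNormedAddCommGroup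
  Matrix.frobeniusNormedSpace

/-- The Frobenius `ContinuousENorm` (now required by `Integrable`), built from the Frobenius seminormed group. -/
def frobeniusContinuousENorm : ContinuousENorm (Matrix (Fin 3) (Fin 3) ℝ) :=
  @SeminormedAddGroup.toContinuousENorm _
    (Matrix.frobeniusSeminormedAddCommGroup).toSeminormedAddGroup

attribute [local instance] frobeniusContinuousENorm

/-- The constitutive map `S(D) = (|D|−m)_+ (M^a − |D|^a)^{−1/a} D/|D|` for `|D| < M`
(with `S(0) = 0`), extended by `S(D) = 0` for `|D| ≥ M`. -/
def SmapExt (a m M : ℝ) (D : Matrix (Fin 3) (Fin 3) ℝ) : Matrix (Fin 3) (Fin 3) ℝ :=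
  if mnorm D < M then
    ((max (mnorm D - m) 0) * (M ^ a - mnorm D ^ a) ^ (-1/a) / mnorm D) • D
  else 0

/-!
Minty's trick. Where `‖H‖ ≤ r < M`, perturb `H` to `B = H + τ w` along a bounded symmetric
direction `w` supported there; dividing the inequality by `τ > 0` gives
`∫ (G − S(H + τ w)) · w ≤ 0`. On the support of `w` the perturbed arguments stay in a ball of
radius `< M`, on which the continuous map `S` is bounded, so dominated convergence lets `τ → 0⁺`
and yields `∫ (G − S(H)) · w ≤ 0`. Taking for `w` the unit direction of `G − S(H)` on
`{‖H‖ ≤ r}` gives `∫_{‖H‖ ≤ r} |G − S(H)| ≤ 0`, and letting `r ↑ M` exhausts `{‖H‖ < M}`,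
which has full measure.
-/

open Matrix Filter Topology Set

local notation "𝕄" => Matrix (Fin 3) (Fin 3) ℝ

theorem mnorm_eq_norm (A : 𝕄) : mnorm A = ‖A‖ := by
  rw [Matrix.frobenius_norm_def, mnorm, mdot, Real.sqrt_eq_rpow]
  simp [Real.norm_eq_abs, sq]

theorem mdot_self (A : 𝕄) : mdot A A = ‖A‖ ^ 2 := by
  rw [← mnorm_eq_norm, mnorm, Real.sq_sqrt]
  exact Finset.sum_nonneg fun i _ => Finset.sum_nonneg fun j _ => mul_self_nonneg _

theorem mdot_smul_right (c : ℝ) (A B : 𝕄) : mdot A (c • B) = c * mdot A B := by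
  simp only [mdot, Matrix.smul_apply, smul_eq_mul, Finset.mul_sum]
  exact Finset.sum_congr rfl fun i _ => Finset.sum_congr rfl fun j _ => by ring

theorem mdot_neg_right (A B : 𝕄) : mdot A (-B) = -mdot A B := by
  simp [mdot]

theorem mdot_zero_right (A : 𝕄) : mdot A 0 = 0 := by
  simp [mdot]

theorem abs_mdot_le (A B : 𝕄) : |mdot A B| ≤ ‖A‖ * ‖B‖ := by
  have hsq : mdot A B ^ 2 ≤ (‖A‖ * ‖B‖) ^ 2 := by
    simp only [mul_pow, ← mdot_self, mdot, ← Fintype.sum_prod_type']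
    simpa [sq] using Finset.sum_mul_sq_le_sq_mul_sq Finset.univ
      (fun p : Fin 3 × Fin 3 => A p.1 p.2) (fun p => B p.1 p.2)
  exact abs_le_of_sq_le_sq hsq (by positivity)

theorem continuous_mdot : Continuous fun p : 𝕄 × 𝕄 => mdot p.1 p.2 := by
  unfold mdot
  fun_prop

theorem mdot_inv_norm_smul_self (A : 𝕄) : mdot A (‖A‖⁻¹ • A) = ‖A‖ := by
  rcases eq_or_ne A 0 with rfl | hA
  · simp [mdot]
  · rw [mdot_smul_right, mdot_self, sq, ← mul_assoc, inv_mul_cancel₀ (norm_ne_zero_iff.2 hA),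
      one_mul]

theorem norm_inv_norm_smul_le_one {E : Type*} [NormedAddCommGroup E] [NormedSpace ℝ E] (x : E) :
    ‖‖x‖⁻¹ • x‖ ≤ 1 := by
  rcases eq_or_ne x 0 with rfl | hx
  · simp
  · exact (norm_smul_inv_norm hx).le

theorem Filter.Tendsto.mdot {α : Type*} {l : Filter α} {f g : α → 𝕄} {A B : 𝕄}
    (hf : Tendsto f l (𝓝 A)) (hg : Tendsto g l (𝓝 B)) :
    Tendsto (fun t => mdot (f t) (g t)) l (𝓝 (mdot A B)) :=
  ((continuous_mdot.tendsto (A, B)).comp (hf.prodMk_nhds hg) :)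

theorem SmapExt_of_norm_lt {a m M : ℝ} {D : 𝕄} (hD : ‖D‖ < M) :
    SmapExt a m M D = (max (‖D‖ - m) 0 * (M ^ a - ‖D‖ ^ a) ^ (-1/a) / ‖D‖) • D := by
  rw [SmapExt, mnorm_eq_norm, if_pos hD]

theorem isSymm_SmapExt (a m M : ℝ) {D : 𝕄} (hD : D.IsSymm) : (SmapExt a m M D).IsSymm := by
  unfold SmapExt
  split_ifs
  exacts [hD.smul _, isSymm_zero]

theorem continuousAt_SmapExt {a m M : ℝ} (ha : 0 < a) (hm : 0 < m) {D₀ : 𝕄} (hD₀ : ‖D₀‖ < M) :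
    ContinuousAt (SmapExt a m M) D₀ := by
  have hn : ContinuousAt (fun D : 𝕄 => ‖D‖) D₀ := continuous_norm.continuousAt
  have hM : ∀ᶠ D in 𝓝 D₀, ‖D‖ < M := hn.eventually_lt continuousAt_const hD₀
  rcases lt_or_ge ‖D₀‖ m with hsmall | hlarge
  · refine (continuousAt_const (y := (0 : 𝕄))).congr ?_
    filter_upwards [hM, hn.eventually_lt continuousAt_const hsmall] with D hDM hDm
    rw [SmapExt_of_norm_lt hDM, max_eq_right (by linarith), zero_mul, zero_div, zero_smul]
  · have hpos : 0 < ‖D₀‖ := hm.trans_le hlarge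
    have hgap : M ^ a - ‖D₀‖ ^ a ≠ 0 :=
      (sub_pos.2 (Real.rpow_lt_rpow (norm_nonneg _) hD₀ ha)).ne'
    have hfactor : ContinuousAt
        (fun D : 𝕄 => max (‖D‖ - m) 0 * (M ^ a - ‖D‖ ^ a) ^ (-1/a) / ‖D‖) D₀ :=
      (((hn.sub continuousAt_const).max continuousAt_const).mul
      ((continuousAt_const.sub (hn.rpow_const (Or.inl hpos.ne'))).rpow_const
        (Or.inl hgap))).div hn hpos.ne'
    refine (hfactor.smul continuousAt_id).congr ?_
    filter_upwards [hM] with D hD using (SmapExt_of_norm_lt hD).symm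

theorem exists_norm_SmapExt_le {a m M : ℝ} (ha : 0 < a) (hm : 0 < m) {r : ℝ} (hr : r < M) :
    ∃ C, 0 ≤ C ∧ ∀ D : 𝕄, ‖D‖ ≤ r → ‖SmapExt a m M D‖ ≤ C := by
  obtain ⟨C, hC⟩ := (isCompact_closedBall (0 : 𝕄) r).exists_bound_of_continuousOn
    fun D hD => (continuousAt_SmapExt ha hm
      ((mem_closedBall_zero_iff.1 hD).trans_lt hr)).continuousWithinAt
  exact ⟨max C 0, le_max_right _ _,
    fun D hD => (hC D (mem_closedBall_zero_iff.2 hD)).trans (le_max_left _ _)⟩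

theorem MeasureTheory.StronglyMeasurable.SmapExt_comp {X : Type*} [MeasurableSpace X] (a m M : ℝ)
    {B : X → 𝕄} (hB : StronglyMeasurable B) :
    StronglyMeasurable fun x => SmapExt a m M (B x) := by
  have hn : Measurable fun x => ‖B x‖ := hB.norm.measurable
  have hfactor : Measurable fun t : ℝ => max (t - m) 0 * (M ^ a - t ^ a) ^ (-1/a) / t := by
    fun_prop
  have hformula := (hfactor.comp hn).stronglyMeasurable.smul hB
  convert hformula.ite (_root_.measurableSet_lt hn measurable_const) stronglyMeasurable_const with x
  simp only [SmapExt, mnorm_eq_norm]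
  rfl

theorem norm_add_smul_le {E : Type*} [SeminormedAddCommGroup E] [NormedSpace ℝ E] {D W : E}
    {r δ τ : ℝ} (hD : ‖D‖ ≤ r) (hW : ‖W‖ ≤ 1) (hτ₀ : 0 ≤ τ) (hτ : τ ≤ δ) :
    ‖D + τ • W‖ ≤ r + δ :=
  calc ‖D + τ • W‖ ≤ ‖D‖ + τ * ‖W‖ := by
        simpa [norm_smul, abs_of_nonneg hτ₀] using norm_add_le D (τ • W)
    _ ≤ r + δ := by nlinarith [norm_nonneg W]

theorem norm_SmapExt_add_smul_le {a m M r δ C τ : ℝ} (hC₀ : 0 ≤ C)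
    (hC : ∀ D : 𝕄, ‖D‖ ≤ r + δ → ‖SmapExt a m M D‖ ≤ C) {D W : 𝕄} (hW : ‖W‖ ≤ 1)
    (hDW : W ≠ 0 → ‖D‖ ≤ r) (hτ₀ : 0 ≤ τ) (hτ : τ ≤ δ) :
    ‖SmapExt a m M (D + τ • W)‖ ≤ ‖SmapExt a m M D‖ + C := by
  rcases eq_or_ne W 0 with rfl | hW₀
  · simpa using hC₀
  · exact (hC _ (norm_add_smul_le (hDW hW₀) hW hτ₀ hτ)).trans
      (le_add_of_nonneg_left (norm_nonneg _))

section Minty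

variable {X : Type*} [MeasurableSpace X] {μ : Measure X}

theorem exists_stronglyMeasurable_isSymm_ae_eq {n : Type*} [Fintype n]
    {f : X → Matrix n n ℝ} (hf : AEStronglyMeasurable f μ) (hsymm : ∀ᵐ x ∂μ, (f x).IsSymm) :
    ∃ g : X → Matrix n n ℝ, StronglyMeasurable g ∧ (∀ x, (g x).IsSymm) ∧ f =ᵐ[μ] g := by
  refine ⟨fun x => (2⁻¹ : ℝ) • (hf.mk f x + (hf.mk f x)ᵀ), ?_, fun x => ?_, ?_⟩
  · have hmk := hf.stronglyMeasurable_mk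
    exact (hmk.add (continuous_id.matrix_transpose.comp_stronglyMeasurable hmk)).const_smul
      (2⁻¹ : ℝ)
  · simp [IsSymm, transpose_smul, add_comm]
  · filter_upwards [hf.ae_eq_mk, hsymm] with x hx hsx
    rw [← hx, hsx.eq]
    module

theorem MeasureTheory.AEStronglyMeasurable.mdot {P Q : X → 𝕄} (hP : AEStronglyMeasurable P μ)
    (hQ : AEStronglyMeasurable Q μ) : AEStronglyMeasurable (fun x => mdot (P x) (Q x)) μ :=
  (continuous_mdot.comp_aestronglyMeasurable (hP.prodMk hQ) :)

variable {a m M : ℝ} {H G : X → 𝕄}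

/-- Phrased with `mnorm`, so that the hypothesis `hmono` of `minty_identification` is literally
`MintyInequality μ a m M G H`. -/
def MintyInequality (μ : Measure X) (a m M : ℝ) (G H : X → 𝕄) : Prop :=
  ∀ B : X → 𝕄, StronglyMeasurable B → (∀ x, (B x).IsSymm) → (∀ᵐ x ∂μ, mnorm (B x) < M) →
    Integrable (fun x => SmapExt a m M (B x)) μ →
    0 ≤ ∫ x, mdot (G x - SmapExt a m M (B x)) (H x - B x) ∂μ

theorem MintyInequality.integral_mdot_add_smul_nonpos (hmono : MintyInequality μ a m M G H)
    {τ : ℝ} (hτ : 0 < τ) {w : X → 𝕄} (hB : StronglyMeasurable fun x => H x + τ • w x)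
    (hBsym : ∀ x, (H x + τ • w x).IsSymm) (hBlt : ∀ᵐ x ∂μ, mnorm (H x + τ • w x) < M)
    (hSB : Integrable (fun x => SmapExt a m M (H x + τ • w x)) μ) :
    ∫ x, mdot (G x - SmapExt a m M (H x + τ • w x)) (w x) ∂μ ≤ 0 := by
  have h := hmono _ hB hBsym hBlt hSB
  simp only [sub_add_cancel_left, mdot_neg_right, mdot_smul_right, integral_neg,
    integral_const_mul] at h
  exact nonpos_of_mul_nonpos_right (neg_nonneg.1 h) hτ

theorem tendsto_integral_mdot_SmapExt_add_smul [IsFiniteMeasure μ] (ha : 0 < a) (hm : 0 < m)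
    (hHmeas : StronglyMeasurable H) (hHlt : ∀ᵐ x ∂μ, ‖H x‖ < M) (hGint : Integrable G μ)
    (hSHint : Integrable (fun x => SmapExt a m M (H x)) μ) {w : X → 𝕄}
    (hw : StronglyMeasurable w) (hw₁ : ∀ x, ‖w x‖ ≤ 1) {δ C : ℝ} (hδ : 0 < δ)
    (hSB : ∀ τ ∈ Icc 0 δ, ∀ x, ‖SmapExt a m M (H x + τ • w x)‖ ≤ ‖SmapExt a m M (H x)‖ + C) :
    Tendsto (fun τ : ℝ => ∫ x, mdot (G x - SmapExt a m M (H x + τ • w x)) (w x) ∂μ) (𝓝[>] 0)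
      (𝓝 (∫ x, mdot (G x - SmapExt a m M (H x)) (w x) ∂μ)) := by
  refine tendsto_integral_filter_of_dominated_convergence
    (fun x => ‖G x‖ + (‖SmapExt a m M (H x)‖ + C)) (Eventually.of_forall fun τ => ?_) ?_
    (hGint.norm.add (hSHint.norm.add (integrable_const C))) ?_
  · have hB : StronglyMeasurable fun x => H x + τ • w x := hHmeas.add (hw.const_smul τ)
    exact (hGint.1.sub (hB.SmapExt_comp a m M).aestronglyMeasurable).mdot hw.aestronglyMeasurable
  · filter_upwards [Ioc_mem_nhdsGT hδ] with τ hτ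
    refine ae_of_all _ fun x => ?_
    rw [Real.norm_eq_abs]
    refine (abs_mdot_le _ _).trans ?_
    calc ‖G x - SmapExt a m M (H x + τ • w x)‖ * ‖w x‖
        ≤ ‖G x - SmapExt a m M (H x + τ • w x)‖ := mul_le_of_le_one_right (norm_nonneg _) (hw₁ x)
      _ ≤ ‖G x‖ + (‖SmapExt a m M (H x)‖ + C) :=
          (norm_sub_le _ _).trans (add_le_add le_rfl (hSB τ (Ioc_subset_Icc_self hτ) x))
  · filter_upwards [hHlt] with x hx
    have hB : Tendsto (fun τ : ℝ => H x + τ • w x) (𝓝[>] 0) (𝓝 (H x)) := by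
      refine tendsto_nhdsWithin_of_tendsto_nhds ?_
      simpa using ((continuous_id.smul continuous_const).const_add (H x)).tendsto (0 : ℝ)
    have hS := (continuousAt_SmapExt ha hm hx).tendsto.comp hB
    exact (tendsto_const_nhds.sub hS).mdot tendsto_const_nhds

theorem MintyInequality.integral_mdot_nonpos [IsFiniteMeasure μ]
    (hmono : MintyInequality μ a m M G H) (ha : 0 < a) (hm : 0 < m)
    (hHmeas : StronglyMeasurable H) (hHsym : ∀ x, (H x).IsSymm) (hHlt : ∀ᵐ x ∂μ, ‖H x‖ < M)
    (hGint : Integrable G μ)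
    (hSHint : Integrable (fun x => SmapExt a m M (H x)) μ) {r : ℝ} (hr : r < M) {w : X → 𝕄}
    (hw : StronglyMeasurable w) (hwsym : ∀ x, (w x).IsSymm) (hw₁ : ∀ x, ‖w x‖ ≤ 1)
    (hwH : ∀ x, w x ≠ 0 → ‖H x‖ ≤ r) :
    ∫ x, mdot (G x - SmapExt a m M (H x)) (w x) ∂μ ≤ 0 := by
  set δ := (M - r) / 2
  have hδ : 0 < δ := by simp only [δ]; linarith
  obtain ⟨C, hC₀, hC⟩ := exists_norm_SmapExt_le ha hm (show r + δ < M by simp only [δ]; linarith)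
  have hSB : ∀ τ ∈ Icc 0 δ, ∀ x,
      ‖SmapExt a m M (H x + τ • w x)‖ ≤ ‖SmapExt a m M (H x)‖ + C :=
    fun τ hτ x => norm_SmapExt_add_smul_le hC₀ hC (hw₁ x) (hwH x) hτ.1 hτ.2
  have hperturbed : ∀ τ ∈ Ioc 0 δ,
      ∫ x, mdot (G x - SmapExt a m M (H x + τ • w x)) (w x) ∂μ ≤ 0 := by
    intro τ hτ
    have hB : StronglyMeasurable fun x => H x + τ • w x := hHmeas.add (hw.const_smul τ)
    refine hmono.integral_mdot_add_smul_nonpos hτ.1 hB (fun x => (hHsym x).add ((hwsym x).smul τ))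
      ?_ ?_
    · filter_upwards [hHlt] with x hx
      rw [mnorm_eq_norm]
      rcases eq_or_ne (w x) 0 with h | h
      · simpa [h] using hx
      · exact (norm_add_smul_le (hwH x h) (hw₁ x) hτ.1.le hτ.2).trans_lt
          (by simp only [δ]; linarith)
    · exact (hSHint.norm.add (integrable_const C)).mono'
        (hB.SmapExt_comp a m M).aestronglyMeasurable (ae_of_all _ (hSB τ (Ioc_subset_Icc_self hτ)))
  exact le_of_tendsto
    (tendsto_integral_mdot_SmapExt_add_smul ha hm hHmeas hHlt hGint hSHint hw hw₁ hδ hSB)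
    (eventually_of_mem (Ioc_mem_nhdsGT hδ) hperturbed)

theorem MintyInequality.ae_eq_SmapExt_of_norm_le [IsFiniteMeasure μ]
    (hmono : MintyInequality μ a m M G H) (ha : 0 < a) (hm : 0 < m)
    (hHmeas : StronglyMeasurable H) (hHsym : ∀ x, (H x).IsSymm) (hHlt : ∀ᵐ x ∂μ, ‖H x‖ < M)
    (hGsym : ∀ x, (G x).IsSymm) (hGint : Integrable G μ)
    (hSHint : Integrable (fun x => SmapExt a m M (H x)) μ) {r : ℝ} (hr : r < M) :
    ∀ᵐ x ∂μ, ‖H x‖ ≤ r → G x = SmapExt a m M (H x) := by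
  have hF : Integrable (fun x => G x - SmapExt a m M (H x)) μ := hGint.sub hSHint
  -- `G` is only a.e. strongly measurable, while test directions must be strongly measurable and
  -- symmetric everywhere: use such a version `F` of `G - S(H)`
  obtain ⟨F, hFmeas, hFsym, hFF⟩ := exists_stronglyMeasurable_isSymm_ae_eq hF.1
    (ae_of_all _ fun x => (hGsym x).sub (isSymm_SmapExt a m M (hHsym x)))
  set E := {x | ‖H x‖ ≤ r}
  have hE : MeasurableSet E := measurableSet_le hHmeas.norm.measurable measurable_const
  set w := E.indicator fun x => ‖F x‖⁻¹ • F x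
  have hI := hmono.integral_mdot_nonpos (w := w) ha hm hHmeas hHsym hHlt hGint hSHint hr
    ((hFmeas.norm.measurable.inv.stronglyMeasurable.smul hFmeas).indicator hE)
    (fun x => by by_cases hx : x ∈ E <;> simp [w, hx, (hFsym x).smul])
    (fun x => by by_cases hx : x ∈ E <;> simp [w, hx, norm_inv_norm_smul_le_one])
    (fun x hx => by_contra fun hxE : x ∉ E => hx (indicator_of_notMem hxE _))
  have hI_eq : (fun x => mdot (G x - SmapExt a m M (H x)) (w x)) =ᵐ[μ]
      E.indicator fun x => ‖G x - SmapExt a m M (H x)‖ := by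
    filter_upwards [hFF] with x hx
    by_cases hxE : x ∈ E
    · simp [w, hxE, hx, mdot_inv_norm_smul_self]
    · simp [w, hxE, mdot_zero_right]
  rw [integral_congr_ae hI_eq] at hI
  have hnonneg : 0 ≤ E.indicator fun x => ‖G x - SmapExt a m M (H x)‖ :=
    indicator_nonneg fun _ _ => norm_nonneg _
  have hzero := (integral_eq_zero_iff_of_nonneg hnonneg (hF.norm.indicator hE)).1
    (le_antisymm hI (integral_nonneg hnonneg))
  filter_upwards [hzero] with x hx hxE
  rwa [Pi.zero_apply, indicator_of_mem (show x ∈ E from hxE), norm_eq_zero, sub_eq_zero] at hx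

end Minty

theorem minty_identification_general (a m M : ℝ) (ha : 0 < a) (hm : 0 < m)
    {X : Type*} [MeasurableSpace X] (μ : Measure X) [IsFiniteMeasure μ]
    (H G : X → Matrix (Fin 3) (Fin 3) ℝ)
    (hHsym : ∀ x, (H x).IsSymm) (hHmeas : StronglyMeasurable H)
    (hHlt : ∀ᵐ x ∂μ, mnorm (H x) < M)
    (hGsym : ∀ x, (G x).IsSymm) (hGint : Integrable G μ)
    (hSHint : Integrable (fun x => SmapExt a m M (H x)) μ)
    (hmono : ∀ B : X → Matrix (Fin 3) (Fin 3) ℝ, StronglyMeasurable B →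
      (∀ x, (B x).IsSymm) → (∀ᵐ x ∂μ, mnorm (B x) < M) →
      Integrable (fun x => SmapExt a m M (B x)) μ →
      0 ≤ ∫ x, mdot (G x - SmapExt a m M (B x)) (H x - B x) ∂μ) :
    ∀ᵐ x ∂μ, G x = SmapExt a m M (H x) := by
  have hHlt' : ∀ᵐ x ∂μ, ‖H x‖ < M := by simpa only [mnorm_eq_norm] using hHlt
  have hlevels : ∀ᵐ x ∂μ, ∀ n : ℕ, ‖H x‖ ≤ M - 1 / (n + 1) → G x = SmapExt a m M (H x) :=
    ae_all_iff.2 fun n => MintyInequality.ae_eq_SmapExt_of_norm_le hmono ha hm hHmeas hHsym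
      hHlt' hGsym hGint hSHint (sub_lt_self M Nat.one_div_pos_of_nat)
  filter_upwards [hlevels, hHlt'] with x hx hxM
  obtain ⟨n, hn⟩ := exists_nat_one_div_lt (sub_pos.2 hxM)
  exact hx n (by linarith)

/-- Minty-type identification: if `G` satisfies
`∫ (G − S(B)) · (H − B) dμ ≥ 0` for all admissible symmetric `B` with `|B| < M` a.e.
(and `S∘B` Bochner integrable), then `G = S(H)` a.e. -/
theorem minty_identification (a m M : ℝ) (ha : 0 < a) (hm : 0 < m) (hmM : m < M)
    {X : Type*} [MeasurableSpace X] (μ : Measure X) [IsFiniteMeasure μ]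
    (H G : X → Matrix (Fin 3) (Fin 3) ℝ)
    (hHsym : ∀ x, (H x).IsSymm) (hHmeas : StronglyMeasurable H)
    (hHlt : ∀ᵐ x ∂μ, mnorm (H x) < M)
    (hGsym : ∀ x, (G x).IsSymm) (hGint : Integrable G μ)
    (hSHint : Integrable (fun x => SmapExt a m M (H x)) μ)
    (hmono : ∀ B : X → Matrix (Fin 3) (Fin 3) ℝ, StronglyMeasurable B →
      (∀ x, (B x).IsSymm) → (∀ᵐ x ∂μ, mnorm (B x) < M) →
      Integrable (fun x => SmapExt a m M (B x)) μ →
      0 ≤ ∫ x, mdot (G x - SmapExt a m M (B x)) (H x - B x) ∂μ) :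
    ∀ᵐ x ∂μ, G x = SmapExt a m M (H x) :=
  minty_identification_general a m M ha hm μ H G hHsym hHmeas hHlt hGsym hGint hSHint hmono
end
end
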